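/- Small-height values for even alphabets: let r = 2p with p ≥ 1. Then (1) f_{k,r}^{{a}} = 2 for all k = 1, …, p; (2) f_{p+1,r}^{{a}} = 3; and (3) f_{k,r}^{{a}} ≤ 4 for all p+1 < k ≤ r. -/

import Mathlib

open Finset

/-- Fitch's parsimony operation: intersection if nonempty, otherwise union. -/
def fitchOp {α : Type*} [DecidableEq α] (B C : Finset α) : Finset α :=
  if (B ∩ C).Nonempty then B ∩ C else B ∪ C

/-- `fCS a R k A` is `f_{k,r}^A`: the minimum number of leaves of the fully
bifurcating tree `T_k` that must be assigned state `a` in order for the Fitch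
root state set to equal `A`, defined by the standard-decomposition recursion,
with base case `f_{0,r}^{{x}} = 1` if `x = a` and `0` otherwise. -/
noncomputable def fCS {α : Type*} [DecidableEq α] (a : α) (R : Finset α) :
    ℕ → Finset α → ℕ
  | 0, A => if a ∈ A then 1 else 0
  | (k+1), A => sInf {n : ℕ | ∃ B C : Finset α, B ⊆ R ∧ C ⊆ R ∧
      B.Nonempty ∧ C.Nonempty ∧ B.card ≤ 2 ^ k ∧ C.card ≤ 2 ^ k ∧
      fitchOp B C = A ∧ n = fCS a R k B + fCS a R k C}

namespace FitchAux

variable {α : Type*} [DecidableEq α]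

lemma fitchOp_inter {B C : Finset α} (h : (B ∩ C).Nonempty) : fitchOp B C = B ∩ C :=
  if_pos h

lemma fitchOp_union {B C : Finset α} (h : B ∩ C = ∅) : fitchOp B C = B ∪ C := by
  unfold fitchOp
  rw [h]
  simp

lemma fitchOp_nonempty {B C : Finset α} (hB : B.Nonempty) (hC : C.Nonempty) :
    (fitchOp B C).Nonempty := by
  unfold fitchOp
  split_ifs with h
  · exact h
  · exact hB.mono subset_union_left

lemma fCS_succ (a : α) (R : Finset α) (k : ℕ) (A : Finset α) :
    fCS a R (k+1) A = sInf {n : ℕ | ∃ B C : Finset α, B ⊆ R ∧ C ⊆ R ∧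
      B.Nonempty ∧ C.Nonempty ∧ B.card ≤ 2 ^ k ∧ C.card ≤ 2 ^ k ∧
      fitchOp B C = A ∧ n = fCS a R k B + fCS a R k C} := rfl

lemma mem_of_fitch_singleton (a : α) {B C : Finset α} (hB : B.Nonempty) (hC : C.Nonempty)
    (h : fitchOp B C = {a}) : a ∈ B ∧ a ∈ C := by
  unfold fitchOp at h
  split_ifs at h with hne
  · have : a ∈ B ∩ C := h ▸ mem_singleton_self a
    exact ⟨(mem_inter.1 this).1, (mem_inter.1 this).2⟩
  · constructor
    · obtain ⟨x, hx⟩ := hB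
      have hxa : x ∈ B ∪ C := mem_union_left _ hx
      rw [h, mem_singleton] at hxa
      exact hxa ▸ hx
    · obtain ⟨x, hx⟩ := hC
      have hxa : x ∈ B ∪ C := mem_union_right _ hx
      rw [h, mem_singleton] at hxa
      exact hxa ▸ hx

/-- Every nonempty set of size ≤ 2^(k+1) has a valid decomposition. -/
lemma exists_decomp (k : ℕ) {B : Finset α} (hne : B.Nonempty) (hcard : B.card ≤ 2^(k+1)) :
    ∃ B1 C1 : Finset α, B1 ⊆ B ∧ C1 ⊆ B ∧ B1.Nonempty ∧ C1.Nonempty ∧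
      B1.card ≤ 2^k ∧ C1.card ≤ 2^k ∧ fitchOp B1 C1 = B := by
  by_cases h : B.card ≤ 2^k
  · refine ⟨B, B, subset_rfl, subset_rfl, hne, hne, h, h, ?_⟩
    rw [fitchOp_inter (by rwa [inter_self]), inter_self]
  · push_neg at h
    obtain ⟨B1, hB1sub, hB1card⟩ := Finset.exists_subset_card_eq (s := B) (n := (2^k)) h.le
    have hpow : (0:ℕ) < 2^k := Nat.pow_pos (n := k) (by norm_num)
    have hsd : (B \ B1).card = B.card - 2^k := by
      rw [card_sdiff_of_subset hB1sub, hB1card]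
    have h2 : (2:ℕ)^(k+1) = 2^k + 2^k := by ring
    refine ⟨B1, B \ B1, hB1sub, sdiff_subset, ?_, ?_, le_of_eq hB1card, ?_, ?_⟩
    · rw [← Finset.card_pos, hB1card]; exact hpow
    · rw [← Finset.card_pos, hsd]; omega
    · rw [hsd]; omega
    · rw [fitchOp_union (by simp), union_sdiff_of_subset hB1sub]

lemma cost_zero (a : α) (R : Finset α) (k : ℕ) : ∀ {B : Finset α}, B ⊆ R → B.Nonempty →
    a ∉ B → B.card ≤ 2^k → fCS a R k B = 0 := by
  induction k with
  | zero => intro B _ _ ha _; simp [fCS, ha]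
  | succ k ih =>
    intro B hBR hne ha hc
    obtain ⟨B1, C1, s1, s2, n1, n2, c1, c2, hf⟩ := exists_decomp k hne hc
    rw [fCS_succ]
    have h0 : (0:ℕ) ∈ {n : ℕ | ∃ B C : Finset α, B ⊆ R ∧ C ⊆ R ∧
      B.Nonempty ∧ C.Nonempty ∧ B.card ≤ 2 ^ k ∧ C.card ≤ 2 ^ k ∧
      fitchOp B C = B ∧ False} ∨ True := Or.inr trivial
    refine Nat.le_zero.mp (Nat.sInf_le ?_)
    refine ⟨B1, C1, s1.trans hBR, s2.trans hBR, n1, n2, c1, c2, hf, ?_⟩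
    rw [ih (s1.trans hBR) n1 (fun h => ha (s1 h)) c1,
        ih (s2.trans hBR) n2 (fun h => ha (s2 h)) c2]

lemma cost_pos (a : α) (R : Finset α) (k : ℕ) : ∀ {B : Finset α}, B ⊆ R → a ∈ B →
    B.card ≤ 2^k → 1 ≤ fCS a R k B := by
  induction k with
  | zero => intro B _ ha _; simp [fCS, ha]
  | succ k ih =>
    intro B hBR ha hc
    rw [fCS_succ]
    rcases Nat.eq_zero_or_pos (sInf {n : ℕ | ∃ B' C' : Finset α, B' ⊆ R ∧ C' ⊆ R ∧
      B'.Nonempty ∧ C'.Nonempty ∧ B'.card ≤ 2 ^ k ∧ C'.card ≤ 2 ^ k ∧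
      fitchOp B' C' = B ∧ n = fCS a R k B' + fCS a R k C'}) with h | h
    · exfalso
      rcases Nat.sInf_eq_zero.mp h with h0 | hS
      · obtain ⟨B1, C1, s1, s2, n1, n2, c1, c2, hf, hsum⟩ := h0
        have hmem : a ∈ B1 ∨ a ∈ C1 := by
          unfold fitchOp at hf
          split_ifs at hf with hI
          · have : a ∈ B1 ∩ C1 := hf.symm ▸ ha
            exact Or.inl (mem_inter.1 this).1
          · have : a ∈ B1 ∪ C1 := hf.symm ▸ ha
            exact mem_union.1 this
        rcases hmem with hm | hm
        · have := ih s1 hm c1; omega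
        · have := ih s2 hm c2; omega
      · obtain ⟨B1, C1, s1, s2, n1, n2, c1, c2, hf⟩ :=
          exists_decomp k ⟨a, ha⟩ hc
        have : (fCS a R k B1 + fCS a R k C1) ∈ {n : ℕ | ∃ B' C' : Finset α, B' ⊆ R ∧ C' ⊆ R ∧
          B'.Nonempty ∧ C'.Nonempty ∧ B'.card ≤ 2 ^ k ∧ C'.card ≤ 2 ^ k ∧
          fitchOp B' C' = B ∧ n = fCS a R k B' + fCS a R k C'} :=
          ⟨B1, C1, s1.trans hBR, s2.trans hBR, n1, n2, c1, c2, hf, rfl⟩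
        rw [hS] at this
        exact this
    · exact h

/-- A set of cost exactly 1 at height k contains `a` and has at least k+1 elements. -/
lemma cost_one_card (a : α) (R : Finset α) (k : ℕ) : ∀ {B : Finset α}, B ⊆ R →
    B.card ≤ 2^k → fCS a R k B = 1 → a ∈ B ∧ k + 1 ≤ B.card := by
  induction k with
  | zero =>
    intro B _ _ h
    by_cases ha : a ∈ B
    · exact ⟨ha, Finset.card_pos.mpr ⟨a, ha⟩⟩
    · simp [fCS, ha] at h
  | succ k ih =>
    intro B hBR hc h
    rw [fCS_succ] at h
    have hSne : {n : ℕ | ∃ B' C' : Finset α, B' ⊆ R ∧ C' ⊆ R ∧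
      B'.Nonempty ∧ C'.Nonempty ∧ B'.card ≤ 2 ^ k ∧ C'.card ≤ 2 ^ k ∧
      fitchOp B' C' = B ∧ n = fCS a R k B' + fCS a R k C'}.Nonempty := by
      by_contra hS
      rw [Set.not_nonempty_iff_eq_empty] at hS
      rw [hS] at h
      simp at h
    have hmem := Nat.sInf_mem hSne
    rw [h] at hmem
    obtain ⟨B1, C1, s1, s2, n1, n2, c1, c2, hf, hsum⟩ := hmem
    have hBne : B.Nonempty := hf ▸ fitchOp_nonempty n1 n2
    have ha : a ∈ B := by
      by_contra ha
      have := cost_zero a R (k+1) hBR hBne ha hc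
      rw [fCS_succ] at this
      omega
    -- main claim handling the (1,0) split in either order
    have main : ∀ B1 C1 : Finset α, B1 ⊆ R → C1 ⊆ R → B1.Nonempty → C1.Nonempty →
        B1.card ≤ 2^k → C1.card ≤ 2^k → fitchOp B1 C1 = B →
        fCS a R k B1 = 1 → fCS a R k C1 = 0 → a ∈ B ∧ k + 2 ≤ B.card := by
      intro B1 C1 s1 s2 n1 n2 c1 c2 hf h1 h0
      obtain ⟨haB1, hcard1⟩ := ih s1 c1 h1
      have haC1 : a ∉ C1 := by
        intro hcon
        have := cost_pos a R k s2 hcon c2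
        omega
      unfold fitchOp at hf
      split_ifs at hf with hI
      · exfalso
        have : a ∈ B1 ∩ C1 := hf.symm ▸ ha
        exact haC1 (mem_inter.1 this).2
      · rw [Finset.not_nonempty_iff_eq_empty] at hI
        have hdisj : Disjoint B1 C1 := Finset.disjoint_iff_inter_eq_empty.mpr hI
        have : B.card = B1.card + C1.card := by
          rw [← hf, Finset.card_union_of_disjoint hdisj]
        have hC1pos : 1 ≤ C1.card := Finset.card_pos.mpr n2
        exact ⟨ha, by omega⟩
    have h1' : fCS a R k B1 = 1 ∧ fCS a R k C1 = 0 ∨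
        fCS a R k B1 = 0 ∧ fCS a R k C1 = 1 := by omega
    rcases h1' with ⟨e1, e0⟩ | ⟨e0, e1⟩
    · exact main B1 C1 s1 s2 n1 n2 c1 c2 hf e1 e0
    · have hf' : fitchOp C1 B1 = B := by
        unfold fitchOp at hf ⊢
        rw [inter_comm, union_comm]
        exact hf
      exact main C1 B1 s2 s1 n2 n1 c2 c1 hf' e1 e0

/-- Sets of size k+1 containing `a` have cost at most 1 at height k. -/
lemma cost_le_one (a : α) (R : Finset α) (k : ℕ) : ∀ {B : Finset α}, a ∈ B → B ⊆ R →
    B.card = k + 1 → fCS a R k B ≤ 1 := by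
  induction k with
  | zero => intro B ha _ _; simp [fCS, ha]
  | succ k ih =>
    intro B ha hBR hc
    have herase : (B.erase a).Nonempty := by
      rw [← Finset.card_pos, card_erase_of_mem ha, hc]; omega
    obtain ⟨b, hb⟩ := herase
    have hba : b ≠ a := (mem_erase.mp hb).1
    have hbB : b ∈ B := (mem_erase.mp hb).2
    have haB' : a ∈ B.erase b := mem_erase.mpr ⟨Ne.symm hba, ha⟩
    have hcB' : (B.erase b).card = k + 1 := by
      rw [card_erase_of_mem hbB, hc]
      omega
    have hBR' : B.erase b ⊆ R := (erase_subset _ _).trans hBR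
    have hk2 : k + 1 ≤ 2^k := Nat.lt_two_pow_self (n := k)
    have hfit : fitchOp (B.erase b) {b} = B := by
      rw [fitchOp_union (by simp), union_comm, ← insert_eq, insert_erase hbB]
    rw [fCS_succ]
    refine le_trans (Nat.sInf_le ⟨B.erase b, {b}, hBR',
      singleton_subset_iff.mpr (hBR hbB), ⟨a, haB'⟩, singleton_nonempty b,
      by rw [hcB']; exact hk2, by simp [Nat.one_le_two_pow], hfit, rfl⟩) ?_
    have h0 : fCS a R k {b} = 0 :=
      cost_zero a R k (singleton_subset_iff.mpr (hBR hbB)) (singleton_nonempty b)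
        (by simp only [mem_singleton]; exact fun h => hba h.symm) (by simp [Nat.one_le_two_pow])
    have h1 := ih haB' hBR' hcB'
    omega

lemma insert_inter_insert_of_disjoint {X Y : Finset α} (a : α) (haX : a ∉ X) (haY : a ∉ Y)
    (hXY : Disjoint X Y) : (insert a X) ∩ (insert a Y) = {a} := by
  ext x
  simp only [mem_inter, mem_insert, mem_singleton]
  constructor
  · rintro ⟨hx1, hx2⟩
    rcases hx1 with rfl | hx1
    · rfl
    · rcases hx2 with rfl | hx2
      · rfl
      · exact absurd (Finset.mem_inter.mpr ⟨hx1, hx2⟩)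
          (by rw [Finset.disjoint_iff_inter_eq_empty.mp hXY]; simp)
  · rintro rfl
    exact ⟨Or.inl rfl, Or.inl rfl⟩

/-- Part 1: f_{k} = 2 for 1 ≤ k ≤ p. -/
lemma part1 (a : α) (R : Finset α) (haR : a ∈ R) (p : ℕ) (hp : 1 ≤ p)
    (hR : R.card = 2 * p) : ∀ k, 1 ≤ k → k ≤ p → fCS a R k {a} = 2 := by
  intro k hk1 hkp
  obtain ⟨m, rfl⟩ : ∃ m, k = m + 1 := ⟨k - 1, by omega⟩
  have hcard : (R.erase a).card = 2*p - 1 := by rw [card_erase_of_mem haR, hR]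
  obtain ⟨X, hXsub, hXcard⟩ := Finset.exists_subset_card_eq (s := (R.erase a)) (n := m) (by omega)
  obtain ⟨Y, hYsub', hYcard⟩ := Finset.exists_subset_card_eq (s := ((R.erase a) \ X)) (n := m)
    (by rw [card_sdiff_of_subset hXsub, hcard, hXcard]; omega)
  have hYsub : Y ⊆ R.erase a := hYsub'.trans sdiff_subset
  have haX : a ∉ X := fun h => (mem_erase.mp (hXsub h)).1 rfl
  have haY : a ∉ Y := fun h => (mem_erase.mp (hYsub h)).1 rfl
  have hXY : Disjoint X Y := by
    refine Finset.disjoint_left.mpr fun {x} hx hy => ?_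
    exact (Finset.mem_sdiff.mp (hYsub' hy)).2 hx
  set B := insert a X with hBdef
  set C := insert a Y with hCdef
  have hBC : B ∩ C = {a} := insert_inter_insert_of_disjoint a haX haY hXY
  have hBcard : B.card = m + 1 := by rw [hBdef, card_insert_of_notMem haX, hXcard]
  have hCcard : C.card = m + 1 := by rw [hCdef, card_insert_of_notMem haY, hYcard]
  have hBR : B ⊆ R := insert_subset haR (hXsub.trans (erase_subset _ _))
  have hCR : C ⊆ R := insert_subset haR (hYsub.trans (erase_subset _ _))
  have hm2 : m + 1 ≤ 2^m := Nat.lt_two_pow_self (n := m)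
  have hcostB : fCS a R m B = 1 := le_antisymm (cost_le_one a R m (mem_insert_self a X) hBR hBcard)
    (cost_pos a R m hBR (mem_insert_self a X) (by omega))
  have hcostC : fCS a R m C = 1 := le_antisymm (cost_le_one a R m (mem_insert_self a Y) hCR hCcard)
    (cost_pos a R m hCR (mem_insert_self a Y) (by omega))
  have hfit : fitchOp B C = {a} := by
    rw [fitchOp_inter (by rw [hBC]; exact singleton_nonempty a), hBC]
  have hmem : (2:ℕ) ∈ {n : ℕ | ∃ B' C' : Finset α, B' ⊆ R ∧ C' ⊆ R ∧
      B'.Nonempty ∧ C'.Nonempty ∧ B'.card ≤ 2 ^ m ∧ C'.card ≤ 2 ^ m ∧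
      fitchOp B' C' = {a} ∧ n = fCS a R m B' + fCS a R m C'} :=
    ⟨B, C, hBR, hCR, ⟨a, mem_insert_self a X⟩, ⟨a, mem_insert_self a Y⟩,
      by omega, by omega, hfit, by rw [hcostB, hcostC]⟩
  rw [fCS_succ]
  refine le_antisymm (Nat.sInf_le hmem) (le_csInf ⟨2, hmem⟩ ?_)
  rintro n ⟨B1, C1, s1, s2, n1, n2, c1, c2, hf, rfl⟩
  obtain ⟨ha1, ha2⟩ := mem_of_fitch_singleton a n1 n2 hf
  have := cost_pos a R m s1 ha1 c1
  have := cost_pos a R m s2 ha2 c2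
  omega

/-- Grow a cost-≤2 set one element at a time above height p. -/
lemma grow (a : α) (R : Finset α) (haR : a ∈ R) (p : ℕ) (hp : 1 ≤ p)
    (hR : R.card = 2 * p) : ∀ m (Z : Finset α), Z ⊆ R.erase a → Z.card = m →
    fCS a R (p + m) (insert a Z) ≤ 2 := by
  intro m
  induction m with
  | zero =>
    intro Z _ hc
    rw [Finset.card_eq_zero.mp hc]
    simp only [LawfulSingleton.insert_empty_eq, Nat.add_zero]
    have := part1 a R haR p hp hR p hp le_rfl
    omega
  | succ m ih =>
    intro Z hZ hc
    obtain ⟨b, hb⟩ : Z.Nonempty := Finset.card_pos.mp (by omega)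
    have hab : b ≠ a := (mem_erase.mp (hZ hb)).1
    have hbR : b ∈ R := (mem_erase.mp (hZ hb)).2
    set Z' := Z.erase b with hZ'def
    have hc' : Z'.card = m := by rw [hZ'def, card_erase_of_mem hb, hc]; omega
    have hZ'sub : Z' ⊆ R.erase a := (erase_subset _ _).trans hZ
    have haZ' : a ∉ Z' := fun h => (mem_erase.mp (hZ'sub h)).1 rfl
    have hkey := ih Z' hZ'sub hc'
    have hbB' : b ∉ insert a Z' := by
      simp only [mem_insert]
      rintro (rfl | h)
      · exact hab rfl
      · exact (notMem_erase b Z) h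
    have hfit : fitchOp (insert a Z') {b} = insert a Z := by
      rw [fitchOp_union (by simp [hbB']), union_comm, ← insert_eq,
        Finset.insert_comm, hZ'def, insert_erase hb]
    have hBR' : insert a Z' ⊆ R := insert_subset haR (hZ'sub.trans (erase_subset _ _))
    have hcardB' : (insert a Z').card = m + 1 := by
      rw [card_insert_of_notMem haZ', hc']
    have hpm : p + m + 1 ≤ 2 ^ (p + m) := Nat.lt_two_pow_self (n := (p + m))
    have h0 : fCS a R (p + m) {b} = 0 :=
      cost_zero a R (p+m) (singleton_subset_iff.mpr hbR) (singleton_nonempty b)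
        (by simp only [mem_singleton]; exact fun h => hab h.symm) (by simp [Nat.one_le_two_pow])
    have hshow : p + (m + 1) = (p + m) + 1 := rfl
    rw [hshow, fCS_succ]
    refine le_trans (Nat.sInf_le ⟨insert a Z', {b}, hBR',
      singleton_subset_iff.mpr hbR, ⟨a, mem_insert_self a Z'⟩, singleton_nonempty b,
      by omega, by simp [Nat.one_le_two_pow], hfit, rfl⟩) ?_
    omega

end FitchAux

open FitchAux in
/-- small-height values for even alphabets r = 2p:
f_{k,r} = 2 for 1 ≤ k ≤ p, f_{p+1,r} = 3, and f_{k,r} ≤ 4 for p+1 < k ≤ r. -/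
theorem stmt_15 {α : Type*} [DecidableEq α] (a : α) (R : Finset α)
    (haR : a ∈ R) (p : ℕ) (hp : 1 ≤ p) (hR : R.card = 2 * p) :
    (∀ k, 1 ≤ k → k ≤ p → fCS a R k {a} = 2) ∧
    fCS a R (p + 1) {a} = 3 ∧
    (∀ k, p + 1 < k → k ≤ 2 * p → fCS a R k {a} ≤ 4) := by
  refine ⟨part1 a R haR p hp hR, ?_, ?_⟩
  · -- f_{p+1} = 3
    have hcard : (R.erase a).card = 2*p - 1 := by rw [card_erase_of_mem haR, hR]
    obtain ⟨Y, hYsub, hYcard⟩ := Finset.exists_subset_card_eq (s := (R.erase a)) (n := p) (by omega)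
    have haY : a ∉ Y := fun h => (mem_erase.mp (hYsub h)).1 rfl
    set C := insert a Y with hCdef
    have hCR : C ⊆ R := insert_subset haR (hYsub.trans (erase_subset _ _))
    have hCcard : C.card = p + 1 := by rw [hCdef, card_insert_of_notMem haY, hYcard]
    have hp2 : p + 1 ≤ 2^p := Nat.lt_two_pow_self (n := p)
    have hcostC : fCS a R p C = 1 :=
      le_antisymm (cost_le_one a R p (mem_insert_self a Y) hCR hCcard)
        (cost_pos a R p hCR (mem_insert_self a Y) (by omega))
    have hcosta : fCS a R p {a} = 2 := part1 a R haR p hp hR p hp le_rfl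
    have hIC : ({a} : Finset α) ∩ C = {a} :=
      Finset.singleton_inter_of_mem (mem_insert_self a Y)
    have hfit : fitchOp {a} C = {a} := by
      rw [fitchOp_inter (by rw [hIC]; exact singleton_nonempty a), hIC]
    have hmem : (3:ℕ) ∈ {n : ℕ | ∃ B' C' : Finset α, B' ⊆ R ∧ C' ⊆ R ∧
        B'.Nonempty ∧ C'.Nonempty ∧ B'.card ≤ 2 ^ p ∧ C'.card ≤ 2 ^ p ∧
        fitchOp B' C' = {a} ∧ n = fCS a R p B' + fCS a R p C'} :=
      ⟨{a}, C, singleton_subset_iff.mpr haR, hCR, singleton_nonempty a,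
        ⟨a, mem_insert_self a Y⟩, by simp [Nat.one_le_two_pow], by omega, hfit,
        by rw [hcosta, hcostC]⟩
    rw [fCS_succ]
    refine le_antisymm (Nat.sInf_le hmem) (le_csInf ⟨3, hmem⟩ ?_)
    rintro n ⟨B1, C1, s1, s2, n1, n2, c1, c2, hf, rfl⟩
    obtain ⟨ha1, ha2⟩ := mem_of_fitch_singleton a n1 n2 hf
    have hpos1 := cost_pos a R p s1 ha1 c1
    have hpos2 := cost_pos a R p s2 ha2 c2
    by_contra hlt
    push_neg at hlt
    have e1 : fCS a R p B1 = 1 := by omega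
    have e2 : fCS a R p C1 = 1 := by omega
    obtain ⟨_, hc1⟩ := cost_one_card a R p s1 c1 e1
    obtain ⟨_, hc2⟩ := cost_one_card a R p s2 c2 e2
    unfold fitchOp at hf
    split_ifs at hf with hI
    · -- intersection case: B1 ∩ C1 = {a}
      have hunion : B1 ∪ C1 ⊆ R := union_subset s1 s2
      have hle : (B1 ∪ C1).card ≤ 2*p := hR ▸ card_le_card hunion
      have := Finset.card_union_add_card_inter B1 C1
      rw [hf] at this
      simp only [card_singleton] at this
      omega
    · -- union case: B1 ∪ C1 = {a}
      have : B1.card ≤ (B1 ∪ C1).card := card_le_card subset_union_left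
      rw [hf, card_singleton] at this
      omega
  · -- f_k ≤ 4 for p+1 < k ≤ 2p
    intro k hk1 hk2
    obtain ⟨j, rfl⟩ : ∃ j, k = p + j + 1 := ⟨k - p - 1, by omega⟩
    have hj1 : 1 ≤ j := by omega
    have hjp : j ≤ p - 1 := by omega
    have hcard : (R.erase a).card = 2*p - 1 := by rw [card_erase_of_mem haR, hR]
    obtain ⟨Z1, hZ1sub, hZ1card⟩ := Finset.exists_subset_card_eq (s := (R.erase a)) (n := j) (by omega)
    obtain ⟨Z2, hZ2sub', hZ2card⟩ := Finset.exists_subset_card_eq (s := ((R.erase a) \ Z1)) (n := j)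
      (by rw [card_sdiff_of_subset hZ1sub, hcard, hZ1card]; omega)
    have hZ2sub : Z2 ⊆ R.erase a := hZ2sub'.trans sdiff_subset
    have haZ1 : a ∉ Z1 := fun h => (mem_erase.mp (hZ1sub h)).1 rfl
    have haZ2 : a ∉ Z2 := fun h => (mem_erase.mp (hZ2sub h)).1 rfl
    have hZdisj : Disjoint Z1 Z2 := by
      refine Finset.disjoint_left.mpr fun {x} hx hy => ?_
      exact (Finset.mem_sdiff.mp (hZ2sub' hy)).2 hx
    set B1 := insert a Z1 with hB1def
    set B2 := insert a Z2 with hB2def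
    have hBC : B1 ∩ B2 = {a} := insert_inter_insert_of_disjoint a haZ1 haZ2 hZdisj
    have hfit : fitchOp B1 B2 = {a} := by
      rw [fitchOp_inter (by rw [hBC]; exact singleton_nonempty a), hBC]
    have hB1R : B1 ⊆ R := insert_subset haR (hZ1sub.trans (erase_subset _ _))
    have hB2R : B2 ⊆ R := insert_subset haR (hZ2sub.trans (erase_subset _ _))
    have hB1card : B1.card = j + 1 := by rw [hB1def, card_insert_of_notMem haZ1, hZ1card]
    have hB2card : B2.card = j + 1 := by rw [hB2def, card_insert_of_notMem haZ2, hZ2card]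
    have hg1 : fCS a R (p + j) B1 ≤ 2 := grow a R haR p hp hR j Z1 hZ1sub hZ1card
    have hg2 : fCS a R (p + j) B2 ≤ 2 := grow a R haR p hp hR j Z2 hZ2sub hZ2card
    have hpow : p + j + 1 ≤ 2 ^ (p + j) := Nat.lt_two_pow_self (n := (p + j))
    rw [fCS_succ]
    refine le_trans (Nat.sInf_le ⟨B1, B2, hB1R, hB2R, ⟨a, mem_insert_self a Z1⟩,
      ⟨a, mem_insert_self a Z2⟩, by omega, by omega, hfit, rfl⟩) ?_
    omega
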